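/- arXiv:2205.09844 — 3 statements merged into one kernel-verified Lean document; each statement's English description precedes it below -/
import Mathlib

section
/- Let K be a subset of QC(A,A'), the set of quantum channels from A to A'. Then K has control if and only if K is convex. -/
noncomputable section
open scoped ComplexOrder
attribute [local instance] Classical.propDecidable
attribute [local instance] FintypeCat.fintype

/-- Square matrices over `ℂ` indexed by `A`: the operators on the Hilbert space `ℂ^A`. -/
abbrev Mat (A : Type) : Type := Matrix A A ℂ

/-- The tensor product (Kronecker product) of two linear maps between matrix algebras. -/
noncomputable def tensorMap {A B A' B' : Type} [Fintype A] [Fintype B]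
    (φ : Mat A →ₗ[ℂ] Mat A') (ψ : Mat B →ₗ[ℂ] Mat B') :
    Mat (A × B) →ₗ[ℂ] Mat (A' × B') where
  toFun X := fun p q =>
    ∑ i : A, ∑ k : A, ∑ j : B, ∑ l : B,
      X (i, j) (k, l) * (φ (Matrix.single i k 1) p.1 q.1 *
        ψ (Matrix.single j l 1) p.2 q.2)
  map_add' X Y := by
    funext p q
    conv_rhs => erw [Matrix.add_apply]
    simp [Matrix.add_apply, add_mul, Finset.sum_add_distrib]
  map_smul' c X := by
    funext p q
    conv_rhs => erw [Matrix.smul_apply]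
    simp [Matrix.smul_apply, Finset.mul_sum, smul_eq_mul, mul_assoc]

/-- Partial trace over the second tensor factor. -/
noncomputable def ptrace {A X : Type} [Fintype X] : Mat (A × X) →ₗ[ℂ] Mat A where
  toFun M := fun a b => ∑ x : X, M (a, x) (b, x)
  map_add' M N := by funext a b; (conv_rhs => erw [Matrix.add_apply]); simp [Matrix.add_apply, Finset.sum_add_distrib]
  map_smul' c M := by funext a b; (conv_rhs => erw [Matrix.smul_apply]); simp [Matrix.smul_apply, Finset.mul_sum, smul_eq_mul]

/-- Tensoring with a fixed state on the right: `M ↦ M ⊗ ρ`. -/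
noncomputable def prep {A X : Type} (ρ : Mat X) : Mat A →ₗ[ℂ] Mat (A × X) where
  toFun M := fun p q => M p.1 q.1 * ρ p.2 q.2
  map_add' M N := by funext p q; (conv_rhs => erw [Matrix.add_apply]); simp [Matrix.add_apply, add_mul]
  map_smul' c M := by funext p q; (conv_rhs => erw [Matrix.smul_apply]); simp [Matrix.smul_apply, smul_eq_mul, mul_assoc]

/-- Applying a (possibly unnormalised) effect, given by a matrix `e`, to the second
tensor factor: `id ⊗ tr(e ·)`. -/
noncomputable def effApp {A X : Type} [Fintype X] (e : Mat X) : Mat (A × X) →ₗ[ℂ] Mat A where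
  toFun M := fun a b => ∑ x : X, ∑ y : X, M (a, x) (b, y) * e y x
  map_add' M N := by funext a b; (conv_rhs => erw [Matrix.add_apply]); simp [Matrix.add_apply, add_mul, Finset.sum_add_distrib]
  map_smul' c M := by funext a b; (conv_rhs => erw [Matrix.smul_apply]); simp [Matrix.smul_apply, Finset.mul_sum, smul_eq_mul, mul_assoc]

/-- A density operator: positive semidefinite with unit trace. -/
def IsDensity {X : Type} [Fintype X] (ρ : Mat X) : Prop :=
  ρ.PosSemidef ∧ ρ.trace = 1

/-- Complete positivity of a linear map between matrix algebras. -/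
def IsCP {A A' : Type} [Fintype A] [Fintype A'] (φ : Mat A →ₗ[ℂ] Mat A') : Prop :=
  ∀ (E : FintypeCat.{0}) (X : Mat (A × E)), X.PosSemidef →
    ((tensorMap φ (LinearMap.id : Mat E →ₗ[ℂ] Mat E)) X).PosSemidef

/-- A quantum channel: a completely positive trace-preserving map. -/
def IsChannel {A A' : Type} [Fintype A] [Fintype A'] (φ : Mat A →ₗ[ℂ] Mat A') : Prop :=
  IsCP φ ∧ ∀ X : Mat A, (φ X).trace = X.trace

/-- The dilation extension of a set `K` of channels by ancillary systems `X, X'`: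
those channels `Φ : A ⊗ X → A' ⊗ X'` all of whose reductions by states on `X` and the
trace on `X'` lie in `K`. -/
def dExt {A A' : Type} [Fintype A] [Fintype A'] (K : Set (Mat A →ₗ[ℂ] Mat A'))
    (X X' : Type) [Fintype X] [Fintype X'] :
    Set (Mat (A × X) →ₗ[ℂ] Mat (A' × X')) :=
  {Φ | IsChannel Φ ∧ ∀ ρ : Mat X, IsDensity ρ → (ptrace ∘ₗ Φ ∘ₗ prep ρ) ∈ K}

/-- Closure under convex combinations. -/
def IsConvexSet {A A' : Type} (K : Set (Mat A →ₗ[ℂ] Mat A')) : Prop :=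
  ∀ φ₀ ∈ K, ∀ φ₁ ∈ K, ∀ p : ℝ, 0 ≤ p → p ≤ 1 →
    ((p : ℂ) • φ₀ + (1 - (p : ℂ)) • φ₁) ∈ K

/-- The discard-prepare channel `M ↦ tr(M) • ρ`. -/
noncomputable def discardPrep {A A' : Type} [Fintype A] (ρ : Mat A') : Mat A →ₗ[ℂ] Mat A' :=
  (Matrix.traceLinearMap A ℂ ℂ).smulRight ρ

/-- A normal set of channels: one containing every discard-prepare channel. -/
def IsNormalSet {A A' : Type} [Fintype A] [Fintype A'] (K : Set (Mat A →ₗ[ℂ] Mat A')) : Prop :=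
  ∀ ρ : Mat A', IsDensity ρ → discardPrep ρ ∈ K

/-- Matrix reassociation `(A ⊗ X) ⊗ Y → A ⊗ (X ⊗ Y)` as a linear map. -/
noncomputable def assocL (A X Y : Type) : Mat ((A × X) × Y) →ₗ[ℂ] Mat (A × (X × Y)) :=
  (Matrix.reindexLinearEquiv ℂ ℂ (Equiv.prodAssoc A X Y) (Equiv.prodAssoc A X Y)).toLinearMap

/-- Matrix reassociation `A ⊗ (X ⊗ Y) → (A ⊗ X) ⊗ Y` as a linear map. -/
noncomputable def assocR (A X Y : Type) : Mat (A × (X × Y)) →ₗ[ℂ] Mat ((A × X) × Y) :=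
  (Matrix.reindexLinearEquiv ℂ ℂ (Equiv.prodAssoc A X Y).symm
    (Equiv.prodAssoc A X Y).symm).toLinearMap

/-- `(id_{A'} ⊗ g) ∘ (Φ ⊗ id_Z) ∘ (id_A ⊗ f)`, suppressing associativity isomorphisms. -/
noncomputable def slide {A A' X X' Y Y' Z : Type}
    [Fintype A] [Fintype A'] [Fintype X] [Fintype X'] [Fintype Y] [Fintype Y'] [Fintype Z]
    (f : Mat Y →ₗ[ℂ] Mat (X × Z)) (g : Mat (X' × Z) →ₗ[ℂ] Mat Y')
    (Φ : Mat (A × X) →ₗ[ℂ] Mat (A' × X')) : Mat (A × Y) →ₗ[ℂ] Mat (A' × Y') :=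
  tensorMap (LinearMap.id : Mat A' →ₗ[ℂ] Mat A') g ∘ₗ assocL A' X' Z ∘ₗ
    tensorMap Φ (LinearMap.id : Mat Z →ₗ[ℂ] Mat Z) ∘ₗ assocR A X Z ∘ₗ
      tensorMap (LinearMap.id : Mat A →ₗ[ℂ] Mat A) f

/-- A locally-applicable transformation of type `K → M` on the category of quantum
channels: a family of functions between dilation extensions commuting with all local
actions on the ancillary systems. -/
structure LocApp {A A' B B' : Type} [Fintype A] [Fintype A'] [Fintype B] [Fintype B']
    (K : Set (Mat A →ₗ[ℂ] Mat A')) (M : Set (Mat B →ₗ[ℂ] Mat B')) where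
  app : ∀ (X X' : FintypeCat.{0}), ↥(dExt K X X') → ↥(dExt M X X')
  natural : ∀ (X X' Y Y' Z : FintypeCat.{0})
      (f : Mat Y →ₗ[ℂ] Mat (X × Z)) (g : Mat (X' × Z) →ₗ[ℂ] Mat Y'),
      IsChannel f → IsChannel g →
      ∀ (Φ : ↥(dExt K X X')) (h : slide f g Φ.1 ∈ dExt K Y Y'),
        (app Y Y' ⟨slide f g Φ.1, h⟩).1 = slide f g (app X X' Φ).1

/-- A set of channels has control if any two members of a common dilation extension
arise as reductions of a single member by a pair of density operators. -/
def HasControl {A A' : Type} [Fintype A] [Fintype A'] (K : Set (Mat A →ₗ[ℂ] Mat A')) : Prop :=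
  ∀ (X X' : FintypeCat.{0}), ∀ φ₀ ∈ dExt K X X', ∀ φ₁ ∈ dExt K X X',
    ∃ (Y Y' : FintypeCat.{0}) (Φ : Mat (A × (X × Y)) →ₗ[ℂ] Mat (A' × (X' × Y')))
      (ρ₀ ρ₁ : Mat Y),
      Φ ∈ dExt K (X × Y) (X' × Y') ∧ IsDensity ρ₀ ∧ IsDensity ρ₁ ∧
      ptrace ∘ₗ assocR A' X' Y' ∘ₗ Φ ∘ₗ assocL A X Y ∘ₗ prep ρ₀ = φ₀ ∧
      ptrace ∘ₗ assocR A' X' Y' ∘ₗ Φ ∘ₗ assocL A X Y ∘ₗ prep ρ₁ = φ₁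

/-- The Choi matrix of a linear map between matrix algebras. -/
noncomputable def choi {A A' : Type} [Fintype A] (φ : Mat A →ₗ[ℂ] Mat A') : Mat (A × A') :=
  fun p q => φ (Matrix.single p.1 q.1 1) p.2 q.2

/-- The linear map associated to a Choi matrix. -/
noncomputable def ofChoi {A A' : Type} [Fintype A] (C : Mat (A × A')) :
    Mat A →ₗ[ℂ] Mat A' where
  toFun X := fun a' b' => ∑ a : A, ∑ b : A, X a b * C (a, a') (b, b')
  map_add' M N := by funext a b; (conv_rhs => erw [Matrix.add_apply]); simp [Matrix.add_apply, add_mul, Finset.sum_add_distrib]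
  map_smul' c M := by funext a b; (conv_rhs => erw [Matrix.smul_apply]); simp [Matrix.smul_apply, Finset.mul_sum, smul_eq_mul, mul_assoc]

/-- The action of a supermap `S` (given in Choi form) on an extended channel, by tensor
extension with the identity on the ancillary systems. -/
noncomputable def supAct {A A' B B' : Type} [Fintype A] [Fintype A'] [Fintype B] [Fintype B']
    (S : Mat (A × A') →ₗ[ℂ] Mat (B × B')) (X X' : Type) [Fintype X] [Fintype X']
    (Φ : Mat (A × X) →ₗ[ℂ] Mat (A' × X')) : Mat (B × X) →ₗ[ℂ] Mat (B' × X') :=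
  ofChoi ((Matrix.reindexLinearEquiv ℂ ℂ (Equiv.prodProdProdComm B B' X X')
      (Equiv.prodProdProdComm B B' X X'))
    ((tensorMap S (LinearMap.id : Mat (X × X') →ₗ[ℂ] Mat (X × X')))
      ((Matrix.reindexLinearEquiv ℂ ℂ (Equiv.prodProdProdComm A X A' X')
        (Equiv.prodProdProdComm A X A' X')) (choi Φ))))

/-- A quantum supermap of type `K → M`, in Choi representation: a completely positive
map on Choi operators whose tensor extension with the identity sends each dilation
extension of `K` into the corresponding dilation extension of `M`. -/
def IsSupermap {A A' B B' : Type} [Fintype A] [Fintype A'] [Fintype B] [Fintype B']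
    (K : Set (Mat A →ₗ[ℂ] Mat A')) (M : Set (Mat B →ₗ[ℂ] Mat B'))
    (S : Mat (A × A') →ₗ[ℂ] Mat (B × B')) : Prop :=
  IsCP S ∧ ∀ (X X' : FintypeCat.{0}), ∀ Φ ∈ dExt K X X', supAct S X X' Φ ∈ dExt M X X'


/-!
If `K` is convex, two extensions `φ₀, φ₁ ∈ dExt K X X'` are merged into the classically
controlled channel `M ↦ φ₀ (M₀₀) + φ₁ (M₁₁)` on `A ⊗ X ⊗ ℂ²`, where `Mᵢᵢ` are the diagonal
blocks with respect to the control qubit. The control states `|i⟩⟨i|` select `φᵢ`, and a state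
`ρ` of `X ⊗ ℂ²` reduces it to `reduce φ₀ ρ₀₀ + reduce φ₁ ρ₁₁`: after normalising the positive
blocks `ρᵢᵢ`, whose traces sum to one, this is a convex combination of elements of `K`.

Conversely, apply control to `φ₀, φ₁ ∈ K` seen as extensions by a trivial ancilla. The resulting
`Φ` reduces to `φᵢ` on the product states `1 ⊗ ρᵢ`, and reduction is linear in the state, so
`1 ⊗ (p ρ₀ + (1 - p) ρ₁)` reduces `Φ` to `p φ₀ + (1 - p) φ₁`, which therefore lies in `K`.
-/

open scoped Kronecker

section MatrixMaps

variable {A A' X X' Y m n : Type}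

def submatrixMap (e : n → m) : Mat m →ₗ[ℂ] Mat n where
  toFun M := M.submatrix e e
  map_add' _ _ := rfl
  map_smul' _ _ := rfl

@[simp] lemma submatrixMap_apply (e : n → m) (M : Mat m) :
    submatrixMap e M = M.submatrix e e := rfl

lemma trace_submatrix_equiv [Fintype m] [Fintype n] (e : n ≃ m) (M : Mat m) :
    (M.submatrix e e).trace = M.trace :=
  e.sum_comp fun i => M i i

@[simp] lemma ptrace_apply [Fintype X] (M : Mat (A × X)) (a b : A) :
    ptrace M a b = ∑ x, M (a, x) (b, x) := rfl

@[simp] lemma prep_apply (ρ : Mat X) (M : Mat A) (p q : A × X) :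
    prep ρ M p q = M p.1 q.1 * ρ p.2 q.2 := rfl

@[simp] lemma assocL_apply (M : Mat ((A × X) × Y)) (p q : A × (X × Y)) :
    assocL A X Y M p q = M ((p.1, p.2.1), p.2.2) ((q.1, q.2.1), q.2.2) := rfl

@[simp] lemma assocR_apply (M : Mat (A × (X × Y))) (p q : (A × X) × Y) :
    assocR A X Y M p q = M (p.1.1, (p.1.2, p.2)) (q.1.1, (q.1.2, q.2)) := rfl

lemma tensorMap_apply [Fintype A] [Fintype X] (φ : Mat A →ₗ[ℂ] Mat A')
    (ψ : Mat X →ₗ[ℂ] Mat X') (M : Mat (A × X)) (p q : A' × X') :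
    tensorMap φ ψ M p q = ∑ i, ∑ k, ∑ j, ∑ l,
      M (i, j) (k, l) * (φ (Matrix.single i k 1) p.1 q.1 * ψ (Matrix.single j l 1) p.2 q.2) :=
  rfl

lemma apply_eq_sum_single [Fintype A] (φ : Mat A →ₗ[ℂ] Mat A') (M : Mat A) (a b : A') :
    φ M a b = ∑ i, ∑ k, M i k * φ (Matrix.single i k 1) a b := by
  conv_lhs => rw [M.matrix_eq_sum_single]
  simp only [map_sum, Matrix.sum_apply]
  refine Finset.sum_congr rfl fun i _ => Finset.sum_congr rfl fun k _ => ?_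
  rw [show Matrix.single i k (M i k) = M i k • Matrix.single i k (1 : ℂ) by
    rw [Matrix.smul_single, smul_eq_mul, mul_one], map_smul]
  rfl

lemma tensorMap_id_apply [Fintype A] [Fintype X] (φ : Mat A →ₗ[ℂ] Mat A') (M : Mat (A × X))
    (p q : A' × X) :
    tensorMap φ LinearMap.id M p q = φ (M.submatrix (·, p.2) (·, q.2)) p.1 q.1 := by
  conv_rhs => rw [apply_eq_sum_single]
  simp [tensorMap_apply, Matrix.single_apply, ite_and]

end MatrixMaps

section Channels

variable {A B C m n : Type} [Fintype A]

lemma tensorMap_comp_id [Fintype B] (f : Mat B →ₗ[ℂ] Mat C) (g : Mat A →ₗ[ℂ] Mat B) (E : Type)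
    [Fintype E] :
    tensorMap (f ∘ₗ g) (LinearMap.id : Mat E →ₗ[ℂ] Mat E) =
      tensorMap f LinearMap.id ∘ₗ tensorMap g LinearMap.id := by
  ext M p q
  have hblock : (tensorMap g LinearMap.id M).submatrix (·, p.2) (·, q.2) =
      g (M.submatrix (·, p.2) (·, q.2)) := by
    ext i k
    exact tensorMap_id_apply g M (i, p.2) (k, q.2)
  simp only [LinearMap.comp_apply, tensorMap_id_apply, hblock]

lemma tensorMap_sum_id {ι : Type} (f : ι → Mat A →ₗ[ℂ] Mat B) (s : Finset ι) (E : Type)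
    [Fintype E] (M : Mat (A × E)) :
    tensorMap (∑ i ∈ s, f i) (LinearMap.id : Mat E →ₗ[ℂ] Mat E) M =
      ∑ i ∈ s, tensorMap (f i) LinearMap.id M := by
  ext p q
  simp only [tensorMap_id_apply, LinearMap.sum_apply, Matrix.sum_apply]

lemma tensorMap_submatrixMap_id [Fintype m] (e : n → m) (E : Type) [Fintype E]
    (M : Mat (m × E)) :
    tensorMap (submatrixMap e) (LinearMap.id : Mat E →ₗ[ℂ] Mat E) M =
      M.submatrix (Prod.map e id) (Prod.map e id) := by
  ext p q
  rw [tensorMap_id_apply]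
  rfl

lemma IsCP.comp [Fintype B] [Fintype C] {f : Mat B →ₗ[ℂ] Mat C} {g : Mat A →ₗ[ℂ] Mat B}
    (hf : IsCP f) (hg : IsCP g) : IsCP (f ∘ₗ g) := fun E M hM => by
  rw [tensorMap_comp_id]
  exact hf E _ (hg E M hM)

lemma isCP_sum [Fintype B] {ι : Type} {f : ι → Mat A →ₗ[ℂ] Mat B} (s : Finset ι)
    (hf : ∀ i ∈ s, IsCP (f i)) : IsCP (∑ i ∈ s, f i) := fun E M hM => by
  rw [tensorMap_sum_id]
  exact Matrix.posSemidef_sum s fun i hi => hf i hi E M hM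

lemma isCP_submatrixMap [Fintype m] [Fintype n] (e : n → m) : IsCP (submatrixMap e) :=
    fun E M hM => by
  rw [tensorMap_submatrixMap_id]
  exact hM.submatrix _

lemma IsChannel.comp [Fintype B] [Fintype C] {f : Mat B →ₗ[ℂ] Mat C} {g : Mat A →ₗ[ℂ] Mat B}
    (hf : IsChannel f) (hg : IsChannel g) : IsChannel (f ∘ₗ g) :=
  ⟨hf.1.comp hg.1, fun M => by rw [LinearMap.comp_apply, hf.2, hg.2]⟩

lemma isChannel_submatrixMap_equiv [Fintype m] [Fintype n] (e : n ≃ m) :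
    IsChannel (submatrixMap e) :=
  ⟨isCP_submatrixMap e, trace_submatrix_equiv e⟩

end Channels

section Densities

variable {X Y : Type} [Fintype X] [Fintype Y]

lemma IsDensity.kronecker {σ : Mat X} {ρ : Mat Y} (hσ : IsDensity σ) (hρ : IsDensity ρ) :
    IsDensity (σ ⊗ₖ ρ) :=
  ⟨hσ.1.kronecker hρ.1, by rw [Matrix.trace_kronecker, hσ.2, hρ.2, one_mul]⟩

lemma isDensity_one [Unique X] : IsDensity (1 : Mat X) :=
  ⟨Matrix.PosSemidef.one, by simp [Matrix.trace]⟩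

lemma isDensity_single [DecidableEq X] (i : X) : IsDensity (Matrix.single i i (1 : ℂ)) := by
  rw [← Matrix.diagonal_single]
  exact ⟨Matrix.posSemidef_diagonal_iff.mpr (Pi.single_nonneg.mpr zero_le_one), by simp⟩

lemma IsDensity.convexComb {ρ σ : Mat X} (hρ : IsDensity ρ) (hσ : IsDensity σ) {p : ℝ}
    (hp₀ : 0 ≤ p) (hp₁ : p ≤ 1) : IsDensity ((p : ℂ) • ρ + (1 - (p : ℂ)) • σ) := by
  refine ⟨(hρ.1.smul ?_).add (hσ.1.smul ?_), ?_⟩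
  · exact_mod_cast hp₀
  · exact_mod_cast sub_nonneg.mpr hp₁
  · rw [Matrix.trace_add, Matrix.trace_smul, Matrix.trace_smul, hρ.2, hσ.2]
    simp

lemma IsDensity.normalize {σ : Mat X} (hσ : σ.PosSemidef) (h : σ.trace ≠ 0) :
    IsDensity (σ.trace⁻¹ • σ) :=
  ⟨hσ.smul (inv_nonneg.mpr hσ.trace_nonneg),
    by rw [Matrix.trace_smul, smul_eq_mul, inv_mul_cancel₀ h]⟩

end Densities

section Reduction

variable {A A' X X' Y Y' : Type}

lemma prep_add (ρ σ : Mat X) (M : Mat A) : prep (ρ + σ) M = prep ρ M + prep σ M := by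
  ext p q
  simp [mul_add]

lemma prep_smul (c : ℂ) (ρ : Mat X) (M : Mat A) : prep (c • ρ) M = c • prep ρ M := by
  ext p q
  simp [mul_left_comm]

variable [Fintype X']

def reduce (Φ : Mat (A × X) →ₗ[ℂ] Mat (A' × X')) : Mat X →ₗ[ℂ] Mat A →ₗ[ℂ] Mat A' where
  toFun ρ := ptrace ∘ₗ Φ ∘ₗ prep ρ
  map_add' ρ σ := by
    ext M : 1
    simp only [LinearMap.comp_apply, LinearMap.add_apply, prep_add, map_add]
  map_smul' c ρ := by
    ext M : 1
    simp only [LinearMap.comp_apply, LinearMap.smul_apply, prep_smul, map_smul, RingHom.id_apply]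

lemma reduce_apply (Φ : Mat (A × X) →ₗ[ℂ] Mat (A' × X')) (ρ : Mat X) :
    reduce Φ ρ = ptrace ∘ₗ Φ ∘ₗ prep ρ := rfl

lemma mem_dExt [Fintype A] [Fintype A'] [Fintype X] {K : Set (Mat A →ₗ[ℂ] Mat A')}
    {Φ : Mat (A × X) →ₗ[ℂ] Mat (A' × X')} :
    Φ ∈ dExt K X X' ↔ IsChannel Φ ∧ ∀ ρ, IsDensity ρ → reduce Φ ρ ∈ K :=
  Iff.rfl

variable [Fintype Y']

def reduceOuter (Φ : Mat (A × (X × Y)) →ₗ[ℂ] Mat (A' × (X' × Y'))) (ρ : Mat Y) :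
    Mat (A × X) →ₗ[ℂ] Mat (A' × X') :=
  ptrace ∘ₗ assocR A' X' Y' ∘ₗ Φ ∘ₗ assocL A X Y ∘ₗ prep ρ

lemma reduce_reduceOuter (Φ : Mat (A × (X × Y)) →ₗ[ℂ] Mat (A' × (X' × Y'))) (σ : Mat X)
    (ρ : Mat Y) : reduce (reduceOuter Φ ρ) σ = reduce Φ (σ ⊗ₖ ρ) := by
  ext M a b
  have hprep : assocL A X Y (prep ρ (prep σ M)) = prep (σ ⊗ₖ ρ) M := by
    ext p q
    simp [mul_assoc]
  simp [reduce_apply, reduceOuter, hprep, Fintype.sum_prod_type]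

end Reduction

section TrivialAncilla

variable {A A' U : Type} [Unique U]

def trivialExt (φ : Mat A →ₗ[ℂ] Mat A') : Mat (A × U) →ₗ[ℂ] Mat (A' × U) :=
  submatrixMap (Equiv.prodUnique A' U) ∘ₗ φ ∘ₗ submatrixMap (Equiv.prodUnique A U).symm

variable [Fintype U]

lemma IsChannel.trivialExt [Fintype A] [Fintype A'] {φ : Mat A →ₗ[ℂ] Mat A'}
    (hφ : IsChannel φ) : IsChannel (trivialExt φ : Mat (A × U) →ₗ[ℂ] Mat (A' × U)) :=
  (isChannel_submatrixMap_equiv _).comp (hφ.comp (isChannel_submatrixMap_equiv _))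

lemma reduce_trivialExt (φ : Mat A →ₗ[ℂ] Mat A') {ρ : Mat U} (hρ : IsDensity ρ) :
    reduce (trivialExt φ) ρ = φ := by
  have hρ₁ : ∀ i j, ρ i j = 1 := fun i j => by
    simpa [Matrix.trace, Subsingleton.elim i default, Subsingleton.elim j default] using hρ.2
  have hprep : ∀ M : Mat A,
      (prep ρ M).submatrix (Equiv.prodUnique A U).symm (Equiv.prodUnique A U).symm = M :=
    fun M => by
      ext a b
      simp [hρ₁]
  ext M a b
  simp [reduce_apply, trivialExt, hprep]

lemma trivialExt_mem_dExt [Fintype A] [Fintype A'] {K : Set (Mat A →ₗ[ℂ] Mat A')}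
    {φ : Mat A →ₗ[ℂ] Mat A'} (hφK : φ ∈ K) (hφ : IsChannel φ) : trivialExt φ ∈ dExt K U U :=
  ⟨hφ.trivialExt, fun ρ hρ => by rw [← reduce_apply, reduce_trivialExt φ hρ]; exact hφK⟩

end TrivialAncilla

section ControlToConvex

variable {A A' : Type} [Fintype A] [Fintype A']

theorem HasControl.isConvexSet {K : Set (Mat A →ₗ[ℂ] Mat A')} (hK : ∀ φ ∈ K, IsChannel φ)
    (hC : HasControl K) : IsConvexSet K := by
  intro φ₀ h₀ φ₁ h₁ p hp₀ hp₁
  -- `FintypeCat.of PUnit` carries the instance `Fintype.ofFinite`, not the one the lemmas above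
  -- would synthesize, so we work with an abstract one-point object instead.
  obtain ⟨P, ⟨_⟩⟩ : ∃ P : FintypeCat, Nonempty (Unique P) := ⟨.of PUnit, ⟨inferInstance⟩⟩
  obtain ⟨Y, Y', Φ, ρ₀, ρ₁, hΦ, hρ₀, hρ₁, hΦ₀, hΦ₁⟩ :=
    hC P P _ (trivialExt_mem_dExt h₀ (hK _ h₀)) _ (trivialExt_mem_dExt h₁ (hK _ h₁))
  have hsel : ∀ (ρ : Mat Y) (φ : Mat A →ₗ[ℂ] Mat A'), reduceOuter Φ ρ = trivialExt φ →
      reduce Φ (1 ⊗ₖ ρ) = φ := fun ρ φ h => by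
    rw [← reduce_reduceOuter, h, reduce_trivialExt φ isDensity_one]
  have hmix := (mem_dExt.1 hΦ).2 _ (isDensity_one.kronecker (hρ₀.convexComb hρ₁ hp₀ hp₁))
  rwa [Matrix.kronecker_add, Matrix.kronecker_smul, Matrix.kronecker_smul, map_add, map_smul,
    map_smul, hsel ρ₀ φ₀ hΦ₀, hsel ρ₁ φ₁ hΦ₁] at hmix

end ControlToConvex

section ConvexToControl

variable {A A' X X' C U : Type}

-- `Complex.coe_smul` only rewrites the `ℝ`-action obtained through `ℂ`, which is not
-- syntactically the pointwise `ℝ`-action on linear maps used by `Convex ℝ`.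
lemma ofReal_smul_linearMap (r : ℝ) (f : Mat A →ₗ[ℂ] Mat A') : (r : ℂ) • f = r • f :=
  Complex.coe_smul r f

lemma IsConvexSet.convex {K : Set (Mat A →ₗ[ℂ] Mat A')} (hK : IsConvexSet K) : Convex ℝ K := by
  intro φ₀ h₀ φ₁ h₁ a b ha hb hab
  obtain rfl : b = 1 - a := by linarith
  have := hK φ₀ h₀ φ₁ h₁ a ha (by linarith)
  rwa [← Complex.ofReal_one, ← Complex.ofReal_sub, ofReal_smul_linearMap,
    ofReal_smul_linearMap] at this

lemma IsConvexSet.sum_mem_of_posSemidef [Fintype X] [Fintype C] {K : Set (Mat A →ₗ[ℂ] Mat A')}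
    (hK : IsConvexSet K) (F : C → Mat X →ₗ[ℂ] Mat A →ₗ[ℂ] Mat A')
    (hF : ∀ c σ, IsDensity σ → F c σ ∈ K) {σ : C → Mat X} (hσ : ∀ c, (σ c).PosSemidef)
    (htr : ∑ c, (σ c).trace = 1) :
    ∑ c, F c (σ c) ∈ K := by
  set t : C → ℝ := fun c => (σ c).trace.re
  have ht : ∀ c, (t c : ℂ) = (σ c).trace := fun c =>
    (Complex.eq_re_of_ofReal_le (by rw [Complex.ofReal_zero]; exact (hσ c).trace_nonneg)).symm
  have hscale : ∀ c, F c (σ c) = t c • F c ((σ c).trace⁻¹ • σ c) := fun c => by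
    rw [← ofReal_smul_linearMap, ht, ← map_smul]
    by_cases h : (σ c).trace = 0
    · simp [(hσ c).trace_eq_zero_iff.1 h]
    · rw [smul_inv_smul₀ h]
  simp_rw [hscale]
  -- only the blocks of nonzero trace carry weight in the convex combination
  rw [← Finset.sum_filter_of_ne (p := fun c => t c ≠ 0) fun c _ h => left_ne_zero_of_smul h]
  refine hK.convex.sum_mem (fun c _ => ?_) ?_ fun c hc => hF c _ (.normalize (hσ c) ?_)
  · exact Complex.zero_le_real.1 ((ht c).symm ▸ (hσ c).trace_nonneg)
  · rw [Finset.sum_filter_of_ne fun c _ h => h]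
    exact_mod_cast (show ∑ c, (t c : ℂ) = 1 by simpa only [ht] using htr)
  · rw [← ht]
    exact_mod_cast (Finset.mem_filter.1 hc).2

end ConvexToControl

section Controlled

variable {A A' X X' C U : Type}

def blockMap (c : C) : Mat (A × (X × C)) →ₗ[ℂ] Mat (A × X) :=
  submatrixMap fun p => (p.1, (p.2, c))

lemma sum_trace_blockMap [Fintype A] [Fintype X] [Fintype C] (M : Mat (A × (X × C))) :
    ∑ c, (blockMap c M).trace = M.trace := by
  simp only [Matrix.trace, Matrix.diag, blockMap, submatrixMap_apply, Matrix.submatrix_apply,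
    Fintype.sum_prod_type]
  rw [Finset.sum_comm]
  exact Finset.sum_congr rfl fun a _ => Finset.sum_comm

lemma sum_trace_submatrix [Fintype X] [Fintype C] (ρ : Mat (X × C)) :
    ∑ c, (ρ.submatrix (·, c) (·, c)).trace = ρ.trace := by
  simp only [Matrix.trace, Matrix.diag, Matrix.submatrix_apply, Fintype.sum_prod_type]
  exact Finset.sum_comm

variable [Unique U]

def controlled [Fintype C] (φ : C → Mat (A × X) →ₗ[ℂ] Mat (A' × X')) :
    Mat (A × (X × C)) →ₗ[ℂ] Mat (A' × (X' × U)) :=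
  submatrixMap ((Equiv.refl A').prodCongr (Equiv.prodUnique X' U)) ∘ₗ ∑ c, φ c ∘ₗ blockMap c

variable [Fintype C] [Fintype U]

lemma IsChannel.controlled [Fintype A] [Fintype A'] [Fintype X] [Fintype X']
    {φ : C → Mat (A × X) →ₗ[ℂ] Mat (A' × X')} (hφ : ∀ c, IsChannel (φ c)) :
    IsChannel (controlled φ : Mat (A × (X × C)) →ₗ[ℂ] Mat (A' × (X' × U))) := by
  refine ⟨(isCP_submatrixMap _).comp
    (isCP_sum _ fun c _ => (hφ c).1.comp (isCP_submatrixMap _)), fun M => ?_⟩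
  simp only [_root_.controlled, LinearMap.comp_apply, submatrixMap_apply, trace_submatrix_equiv,
    LinearMap.sum_apply, Matrix.trace_sum, (hφ _).2]
  exact sum_trace_blockMap M

lemma reduce_controlled [Fintype X'] (φ : C → Mat (A × X) →ₗ[ℂ] Mat (A' × X'))
    (ρ : Mat (X × C)) :
    reduce (controlled φ : Mat (A × (X × C)) →ₗ[ℂ] Mat (A' × (X' × U))) ρ =
      ∑ c, reduce (φ c) (ρ.submatrix (·, c) (·, c)) := by
  have hblock : ∀ c (M : Mat A), blockMap c (prep ρ M) = prep (ρ.submatrix (·, c) (·, c)) M :=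
    fun _ _ => rfl
  ext M a b
  simpa [reduce_apply, controlled, hblock, Fintype.sum_prod_type, Matrix.sum_apply] using
    Finset.sum_comm

lemma reduceOuter_controlled_single [Fintype X'] [DecidableEq C]
    (φ : C → Mat (A × X) →ₗ[ℂ] Mat (A' × X')) (c : C) :
    reduceOuter (controlled φ : Mat (A × (X × C)) →ₗ[ℂ] Mat (A' × (X' × U)))
      (Matrix.single c c 1) = φ c := by
  have hblock : ∀ d (M : Mat (A × X)),
      blockMap d (assocL A X C (prep (Matrix.single c c 1) M)) = if d = c then M else 0 := by
    intro d M
    split_ifs with h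
    · ext p q
      simp [blockMap, h]
    · ext p q
      simp [blockMap, Ne.symm h]
  ext M a b
  simp [reduceOuter, controlled, hblock, apply_ite]

lemma controlled_mem_dExt [Fintype A] [Fintype A'] [Fintype X] [Fintype X']
    {K : Set (Mat A →ₗ[ℂ] Mat A')} (hK : IsConvexSet K)
    {φ : C → Mat (A × X) →ₗ[ℂ] Mat (A' × X')} (hφ : ∀ c, φ c ∈ dExt K X X') :
    (controlled φ : Mat (A × (X × C)) →ₗ[ℂ] Mat (A' × (X' × U))) ∈ dExt K (X × C) (X' × U) := by
  refine ⟨.controlled fun c => (hφ c).1, fun ρ hρ => ?_⟩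
  rw [← reduce_apply, reduce_controlled]
  exact hK.sum_mem_of_posSemidef (fun c => reduce (φ c)) (fun c => (hφ c).2)
    (fun _ => hρ.1.submatrix _) (by rw [sum_trace_submatrix, hρ.2])

end Controlled

theorem IsConvexSet.hasControl {A A' : Type} [Fintype A] [Fintype A']
    {K : Set (Mat A →ₗ[ℂ] Mat A')} (hK : IsConvexSet K) : HasControl K := by
  intro X X' φ₀ h₀ φ₁ h₁
  obtain ⟨P, ⟨_⟩⟩ : ∃ P : FintypeCat, Nonempty (Unique P) := ⟨.of PUnit, ⟨inferInstance⟩⟩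
  obtain ⟨B, ⟨e⟩⟩ : ∃ B : FintypeCat, Nonempty (Fin 2 ≃ B) := ⟨.of (Fin 2), ⟨Equiv.refl _⟩⟩
  have hsel : ∀ i, reduceOuter (controlled (U := P) (![φ₀, φ₁] ∘ e.symm))
      (Matrix.single (e i) (e i) 1) = ![φ₀, φ₁] i := fun i => by
    rw [reduceOuter_controlled_single, Function.comp_apply, e.symm_apply_apply]
  refine ⟨B, P, _, _, _, controlled_mem_dExt hK fun c => ?_, isDensity_single (e 0),
    isDensity_single (e 1), hsel 0, hsel 1⟩
  obtain ⟨i, rfl⟩ := e.surjective c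
  fin_cases i <;> simpa

/-- A subset `K` of the quantum channels `QC(A,A')` has control if and
only if it is convex. -/
theorem control_iff_convex (A A' : FintypeCat.{0})
    (K : Set (Mat A →ₗ[ℂ] Mat A')) (hK : ∀ φ ∈ K, IsChannel φ) :
    HasControl K ↔ IsConvexSet K :=
  ⟨HasControl.isConvexSet hK, IsConvexSet.hasControl⟩
end
end

section
/- Let C be a symmetric monoidal category with braiding β, and let a : B → A⊗E and b : A'⊗E → B' be morphisms of C. Then the comb family comb[a,b], defined by comb[a,b]_{X,X'}(φ) = (b ⊗ id_{X'}) ∘ (id_{A'} ⊗ β_{X',E}) ∘ (φ ⊗ id_E) ∘ (id_A ⊗ β_{E,X}) ∘ (a ⊗ id_X) for φ : A⊗X → A'⊗X', is a locally-applicable transformation of type C(A⊗-, A'⊗=) → C(B⊗-, B'⊗=); that is, for all f : Y → X⊗Z, g : X'⊗Z → Y' and φ : A⊗X → A'⊗X': comb[a,b]_{Y,Y'}((id_{A'} ⊗ g) ∘ (φ ⊗ id_Z) ∘ (id_A ⊗ f)) = (id_{B'} ⊗ g) ∘ (comb[a,b]_{X,X'}(φ) ⊗ id_Z) ∘ (id_B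 ⊗ f), suppressing associativity isomorphisms. -/
/-!
The comb only acts on the `A`-wire and on the wire `E` that it routes around `φ`. Pre- and
postcomposition with maps on `X`, `X'` slide past `a`, `b` and the braidings by naturality. A
parallel wire `Z` is crossed by `E` twice, once by `β_{E,Z}` and once by `β_{Z,E}`, and these
crossings cancel by symmetry; the rest is coherence of the associators.
-/

noncomputable section
open CategoryTheory MonoidalCategory

universe v u

/-- `(id_{A'} ⊗ g) ∘ (φ ⊗ id_Z) ∘ (id_A ⊗ f)` in a monoidal category, written with
explicit associators. -/
def slideC {C : Type u} [Category.{v} C] [MonoidalCategory C] {A A' X X' Y Y' Z : C}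
    (f : Y ⟶ X ⊗ Z) (g : X' ⊗ Z ⟶ Y') (φ : A ⊗ X ⟶ A' ⊗ X') : A ⊗ Y ⟶ A' ⊗ Y' :=
  (𝟙 A ⊗ₘ f) ≫ (α_ A X Z).inv ≫ (φ ⊗ₘ 𝟙 Z) ≫ (α_ A' X' Z).hom ≫ (𝟙 A' ⊗ₘ g)

/-- The comb family `comb[a,b]` built from `a : B ⟶ A ⊗ E` and `b : A' ⊗ E ⟶ B'`:
`comb[a,b]_{X,X'}(φ) = (b ⊗ id) ∘ (id ⊗ β) ∘ (φ ⊗ id) ∘ (id ⊗ β) ∘ (a ⊗ id)`,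
with explicit associators. -/
def combApp {C : Type u} [Category.{v} C] [MonoidalCategory C] [SymmetricCategory C]
    {A A' B B' E : C} (a : B ⟶ A ⊗ E) (b : A' ⊗ E ⟶ B') (X X' : C)
    (φ : A ⊗ X ⟶ A' ⊗ X') : B ⊗ X ⟶ B' ⊗ X' :=
  (a ⊗ₘ 𝟙 X) ≫ (α_ A E X).hom ≫ (𝟙 A ⊗ₘ (β_ E X).hom) ≫ (α_ A X E).inv ≫
    (φ ⊗ₘ 𝟙 E) ≫ (α_ A' X' E).hom ≫ (𝟙 A' ⊗ₘ (β_ X' E).hom) ≫ (α_ A' E X').inv ≫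
      (b ⊗ₘ 𝟙 X')

namespace CategoryTheory.SymmetricCategory

variable {C : Type u} [Category.{v} C] [MonoidalCategory C] [SymmetricCategory C]

lemma whiskerRight_tensor_swap {P Q : C} (φ : P ⟶ Q) (E Z : C) :
    φ ▷ (E ⊗ Z) = P ◁ (β_ E Z).hom ≫ φ ▷ (Z ⊗ E) ≫ Q ◁ (β_ Z E).hom := by
  rw [whisker_exchange_assoc, ← whiskerLeft_comp, symmetry, whiskerLeft_id, Category.comp_id]

end CategoryTheory.SymmetricCategory

section Comb

variable {C : Type u} [Category.{v} C] [MonoidalCategory C]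

/-- `φ ⊗ id_Z`, reassociated. -/
def whiskerRightAssoc {A A' X X' : C} (φ : A ⊗ X ⟶ A' ⊗ X') (Z : C) :
    A ⊗ (X ⊗ Z) ⟶ A' ⊗ (X' ⊗ Z) :=
  (α_ A X Z).inv ≫ φ ▷ Z ≫ (α_ A' X' Z).hom

lemma slideC_eq {A A' X X' Y Y' Z : C} (f : Y ⟶ X ⊗ Z) (g : X' ⊗ Z ⟶ Y')
    (φ : A ⊗ X ⟶ A' ⊗ X') :
    slideC f g φ = A ◁ f ≫ whiskerRightAssoc φ Z ≫ A' ◁ g := by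
  simp only [slideC, whiskerRightAssoc, id_tensorHom, tensorHom_id, Category.assoc]

variable [SymmetricCategory C] {A A' B B' E : C} (a : B ⟶ A ⊗ E) (b : A' ⊗ E ⟶ B')

lemma combApp_whiskerLeft_comp {X X' Y : C} (f : Y ⟶ X) (ψ : A ⊗ X ⟶ A' ⊗ X') :
    combApp a b Y X' (A ◁ f ≫ ψ) = B ◁ f ≫ combApp a b X X' ψ := by
  simp only [combApp, id_tensorHom, tensorHom_id, comp_whiskerRight, Category.assoc]
  rw [whisker_exchange_assoc, associator_naturality_right_assoc, ← whiskerLeft_comp_assoc,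
    BraidedCategory.braiding_naturality_right, whiskerLeft_comp_assoc,
    associator_inv_naturality_middle_assoc]

lemma combApp_comp_whiskerLeft {X X' Y' : C} (ψ : A ⊗ X ⟶ A' ⊗ X') (g : X' ⟶ Y') :
    combApp a b X Y' (ψ ≫ A' ◁ g) = combApp a b X X' ψ ≫ B' ◁ g := by
  simp only [combApp, id_tensorHom, tensorHom_id, comp_whiskerRight, Category.assoc]
  rw [← whisker_exchange, ← associator_inv_naturality_right_assoc, ← whiskerLeft_comp_assoc,
    ← BraidedCategory.braiding_naturality_left, whiskerLeft_comp_assoc,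
    associator_naturality_middle_assoc]

lemma combApp_whiskerRightAssoc {X X' : C} (φ : A ⊗ X ⟶ A' ⊗ X') (Z : C) :
    combApp a b (X ⊗ Z) (X' ⊗ Z) (whiskerRightAssoc φ Z) =
      whiskerRightAssoc (combApp a b X X' φ) Z := by
  simp only [combApp, whiskerRightAssoc, id_tensorHom, tensorHom_id, comp_whiskerRight,
    BraidedCategory.braiding_tensor_left_hom, BraidedCategory.braiding_tensor_right_hom]
  rw [whiskerRight_tensor_symm φ E Z, SymmetricCategory.whiskerRight_tensor_swap φ E Z]
  monoidal

end Comb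

/-- **Statement 7.** In any symmetric monoidal category, the comb family `comb[a,b]` is a
locally-applicable transformation of type `C(A⊗-, A'⊗=) → C(B⊗-, B'⊗=)`: it satisfies the
sliding equation against all `f : Y ⟶ X ⊗ Z` and `g : X' ⊗ Z ⟶ Y'`. -/
theorem comb_is_locally_applicable {C : Type u} [Category.{v} C] [MonoidalCategory C]
    [SymmetricCategory C] {A A' B B' E : C} (a : B ⟶ A ⊗ E) (b : A' ⊗ E ⟶ B')
    (X X' Y Y' Z : C) (f : Y ⟶ X ⊗ Z) (g : X' ⊗ Z ⟶ Y') (φ : A ⊗ X ⟶ A' ⊗ X') :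
    combApp a b Y Y' (slideC f g φ) = slideC f g (combApp a b X X' φ) := by
  rw [slideC_eq, slideC_eq, combApp_whiskerLeft_comp, combApp_comp_whiskerLeft,
    combApp_whiskerRightAssoc]
end
end

section
/- Every locally-applicable transformation S : K → M on Stoch satisfies tensor separation: for every Φ ∈ dExt_{X,X'}(K) and every stochastic matrix ψ ∈ Stoch(Y,Y'), S_{X·Y, X'·Y'}(Φ ⊗ ψ) = S_{X,X'}(Φ) ⊗ ψ. -/
noncomputable section
open scoped Kronecker
attribute [local instance] Classical.propDecidable
attribute [local instance] FintypeCat.fintype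

/-- Entrywise nonnegativity: a morphism of `Mat[ℝ₊]`. -/
def Nonneg {m n : Type} (f : Matrix m n ℝ) : Prop := ∀ i j, 0 ≤ f i j

/-- A column-stochastic matrix: a morphism of `Stoch`. -/
def IsStoch {m n : Type} [Fintype m] (f : Matrix m n ℝ) : Prop :=
  Nonneg f ∧ ∀ j, ∑ i, f i j = 1

/-- A probability vector. -/
def IsProb {X : Type} [Fintype X] (ρ : X → ℝ) : Prop :=
  (∀ x, 0 ≤ ρ x) ∧ ∑ x, ρ x = 1

/-- Reduction of an extended map by a (generalised) state `ρ` on the input ancilla and a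
(generalised) effect `σ` on the output ancilla. -/
def margE {A A' X X' : Type} [Fintype X] [Fintype X'] (Φ : Matrix (A' × X') (A × X) ℝ)
    (ρ : X → ℝ) (σ : X' → ℝ) : Matrix A' A ℝ :=
  Matrix.of fun a' a => ∑ x' : X', ∑ x : X, σ x' * Φ (a', x') (a, x) * ρ x

/-- Reduction by a state on the input ancilla and the discard on the output ancilla. -/
def marg {A A' X X' : Type} [Fintype X] [Fintype X'] (Φ : Matrix (A' × X') (A × X) ℝ)
    (ρ : X → ℝ) : Matrix A' A ℝ :=
  margE Φ ρ (fun _ => 1)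

/-- The dilation extension of a set `K ⊆ Stoch(A,A')` by ancillas `X, X'`. -/
def dExtS {A A' : Type} [Fintype A'] (K : Set (Matrix A' A ℝ))
    (X X' : Type) [Fintype X] [Fintype X'] : Set (Matrix (A' × X') (A × X) ℝ) :=
  {Φ | IsStoch Φ ∧ ∀ ρ : X → ℝ, IsProb ρ → marg Φ ρ ∈ K}

/-- Closure under convex combinations. -/
def IsConvexSetS {A A' : Type} (K : Set (Matrix A' A ℝ)) : Prop :=
  ∀ φ₀ ∈ K, ∀ φ₁ ∈ K, ∀ p : ℝ, 0 ≤ p → p ≤ 1 → (p • φ₀ + (1 - p) • φ₁) ∈ K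

/-- A normal set: one containing every discard-prepare map. -/
def IsNormalSetS {A A' : Type} [Fintype A'] (K : Set (Matrix A' A ℝ)) : Prop :=
  ∀ ρ : A' → ℝ, IsProb ρ → (Matrix.of fun a' (_ : A) => ρ a') ∈ K

/-- `(id_{A'} ⊗ g) · (Φ ⊗ id_Z) · (id_A ⊗ f)`, suppressing associativity isomorphisms. -/
def slideS {A A' X X' Y Y' Z : Type} [Fintype A] [Fintype A'] [Fintype X] [Fintype X']
    [Fintype Y] [Fintype Y'] [Fintype Z]
    (f : Matrix (X × Z) Y ℝ) (g : Matrix Y' (X' × Z) ℝ)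
    (Φ : Matrix (A' × X') (A × X) ℝ) : Matrix (A' × Y') (A × Y) ℝ :=
  ((1 : Matrix A' A' ℝ) ⊗ₖ g) *
    (Matrix.reindex (Equiv.prodAssoc A' X' Z) (Equiv.prodAssoc A X Z)
      (Φ ⊗ₖ (1 : Matrix Z Z ℝ))) *
    ((1 : Matrix A A ℝ) ⊗ₖ f)

/-- A locally-applicable transformation of type `K → M` on `Stoch`. -/
structure LocAppS {A A' B B' : Type} [Fintype A] [Fintype A'] [Fintype B] [Fintype B']
    (K : Set (Matrix A' A ℝ)) (M : Set (Matrix B' B ℝ)) where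
  app : ∀ (X X' : FintypeCat.{0}), ↥(dExtS K X X') → ↥(dExtS M X X')
  natural : ∀ (X X' Y Y' Z : FintypeCat.{0})
      (f : Matrix (X × Z) Y ℝ) (g : Matrix Y' (X' × Z) ℝ),
      IsStoch f → IsStoch g →
      ∀ (Φ : ↥(dExtS K X X')) (h : slideS f g Φ.1 ∈ dExtS K Y Y'),
        (app Y Y' ⟨slideS f g Φ.1, h⟩).1 = slideS f g (app X X' Φ).1

/-- Reduction of a doubly-extended map by a state on the control ancilla and the discard
on its output. -/
def margCtrl {A A' X X' Y Y' : Type} [Fintype Y] [Fintype Y']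
    (Φ : Matrix (A' × (X' × Y')) (A × (X × Y)) ℝ) (ρ : Y → ℝ) :
    Matrix (A' × X') (A × X) ℝ :=
  Matrix.of fun p q => ∑ y' : Y', ∑ y : Y, Φ (p.1, (p.2, y')) (q.1, (q.2, y)) * ρ y

/-- A set `K ⊆ Stoch(A,A')` has control if any two members of a common dilation extension
arise as reductions of a single member by a pair of probability vectors. -/
def HasControlS {A A' : Type} [Fintype A] [Fintype A'] (K : Set (Matrix A' A ℝ)) : Prop :=
  ∀ (X X' : FintypeCat.{0}), ∀ φ₀ ∈ dExtS K X X', ∀ φ₁ ∈ dExtS K X X',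
    ∃ (Y Y' : FintypeCat.{0}) (Φ : Matrix (A' × (X' × Y')) (A × (X × Y)) ℝ)
      (ρ₀ ρ₁ : Y → ℝ),
      Φ ∈ dExtS K (X × Y) (X' × Y') ∧ IsProb ρ₀ ∧ IsProb ρ₁ ∧
      margCtrl Φ ρ₀ = φ₀ ∧ margCtrl Φ ρ₁ = φ₁

/-- The action of a `Mat[ℝ₊]`-supermap `S` (acting on vectorizations) on an extended
morphism, by tensor extension with the identity via the compact structure. -/
def supActS {A A' B B' X X' : Type} [Fintype A] [Fintype A']
    (S : Matrix (B × B') (A × A') ℝ) (Φ : Matrix (A' × X') (A × X) ℝ) :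
    Matrix (B' × X') (B × X) ℝ :=
  Matrix.of fun p q => ∑ a : A, ∑ a' : A', S (q.1, p.1) (a, a') * Φ (a', p.2) (a, q.2)

/-- A `Mat[ℝ₊]`-supermap of type `K → M` on `Stoch`. -/
def IsSupermapS {A A' B B' : Type} [Fintype A] [Fintype A'] [Fintype B']
    (K : Set (Matrix A' A ℝ)) (M : Set (Matrix B' B ℝ))
    (S : Matrix (B × B') (A × A') ℝ) : Prop :=
  Nonneg S ∧ ∀ (X X' : FintypeCat.{0}), ∀ Φ ∈ dExtS K X X', supActS S Φ ∈ dExtS M X X'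

/-- `Φ ⊗ ψ` as a morphism `A·(X·Y) → A'·(X'·Y')`, suppressing associators. -/
def tensExtS {A A' X X' Y Y' : Type}
    (Φ : Matrix (A' × X') (A × X) ℝ) (ψ : Matrix Y' Y ℝ) :
    Matrix (A' × (X' × Y')) (A × (X × Y)) ℝ :=
  Matrix.reindex (Equiv.prodAssoc A' X' Y') (Equiv.prodAssoc A X Y) (Φ ⊗ₖ ψ)

/-! `Φ ⊗ ψ` is the slide of `Φ` along the ancilla `Z = Y` with `f = id` and `g = id_{X'} ⊗ ψ`,
so tensor separation is a single instance of local applicability. -/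

lemma isStoch_one (X : Type) [Fintype X] [DecidableEq X] : IsStoch (1 : Matrix X X ℝ) :=
  ⟨fun i j => by by_cases h : i = j <;> simp [Matrix.one_apply, h],
    fun j => by simp [Matrix.one_apply]⟩

lemma IsStoch.kronecker {X X' Y Y' : Type} [Fintype X'] [Fintype Y']
    {f : Matrix X' X ℝ} {g : Matrix Y' Y ℝ} (hf : IsStoch f) (hg : IsStoch g) :
    IsStoch (f ⊗ₖ g) := by
  refine ⟨fun i j => mul_nonneg (hf.1 _ _) (hg.1 _ _), fun j => ?_⟩
  simp only [Fintype.sum_prod_type, Matrix.kroneckerMap_apply, ← Finset.sum_mul_sum, hf.2,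
    hg.2, mul_one]

lemma slideS_one_kronecker_eq_tensExtS {A A' X X' Y Y' : Type} [Fintype A] [Fintype A']
    [Fintype X] [Fintype X'] [Fintype Y] [Fintype Y']
    (Φ : Matrix (A' × X') (A × X) ℝ) (ψ : Matrix Y' Y ℝ) :
    slideS 1 ((1 : Matrix X' X' ℝ) ⊗ₖ ψ) Φ = tensExtS Φ ψ := by
  have hassoc : (1 : Matrix A' A' ℝ) ⊗ₖ ((1 : Matrix X' X' ℝ) ⊗ₖ ψ) =
      Matrix.reindex (Equiv.prodAssoc A' X' Y') (Equiv.prodAssoc A' X' Y) (1 ⊗ₖ ψ) := by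
    rw [← Matrix.kronecker_assoc, Matrix.one_kronecker_one]
  rw [slideS, Matrix.one_kronecker_one, Matrix.mul_one, hassoc, Matrix.reindex_apply,
    Matrix.reindex_apply, Matrix.submatrix_mul_equiv, ← Matrix.mul_kronecker_mul,
    Matrix.one_mul, Matrix.mul_one]
  rfl

/-- **Statement 15.** Every locally-applicable transformation `S : K → M` on `Stoch`
satisfies tensor separation: `S(Φ ⊗ ψ) = S(Φ) ⊗ ψ` for every stochastic `ψ`. -/
theorem stoch_locApp_tensor_separation (A A' B B' : FintypeCat.{0})
    (K : Set (Matrix A' A ℝ)) (M : Set (Matrix B' B ℝ))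
    (S : LocAppS K M) (X X' Y Y' : FintypeCat.{0})
    (Φ : ↥(dExtS K X X')) (ψ : Matrix Y' Y ℝ) (hψ : IsStoch ψ)
    (h : tensExtS Φ.1 ψ ∈ dExtS K (X × Y) (X' × Y')) :
    (S.app (FintypeCat.of (X × Y)) (FintypeCat.of (X' × Y')) ⟨tensExtS Φ.1 ψ, by convert h⟩).1 =
      tensExtS (S.app X X' Φ).1 ψ := by
  have hslide := S.natural X X' (.of (X × Y)) (.of (X' × Y')) Y 1 ((1 : Matrix X' X' ℝ) ⊗ₖ ψ)
    (isStoch_one _) (by convert (isStoch_one X').kronecker hψ) Φ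
    (by convert h; exact slideS_one_kronecker_eq_tensExtS Φ.1 ψ)
  -- `FintypeCat.of (X × Y)` carries `Fintype.ofFinite`, not the product instance.
  convert hslide using 1
  · exact congrArg (fun Ψ => (S.app _ _ Ψ).1)
      (Subtype.ext (slideS_one_kronecker_eq_tensExtS Φ.1 ψ).symm)
  · exact (slideS_one_kronecker_eq_tensExtS (S.app X X' Φ).1 ψ).symm
end
end
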